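/- (Strong law of large numbers for the Kac chain) For every T ∈ ℕ, for μ_m-almost every (x,y) ∈ {0,1}^ℤ × {0,1}^ℤ, one has lim_{N→∞} m_i^N(φ^t(x,y)) = Φ_i^t(m) for all i ∈ {0,1} and all t ∈ {0,…,T}, where Φ(m) = ((1−2m₁)m₀, m₁). -/

import Mathlib

open MeasureTheory ProbabilityTheory Filter

/-- The Kac chain dynamics. -/
def kacPhi (p : (ℤ → ℤ) × (ℤ → ℤ)) : (ℤ → ℤ) × (ℤ → ℤ) :=
  (fun i => p.1 (i - 1) + p.2 (i - 1) - 2 * p.1 (i - 1) * p.2 (i - 1), p.2)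

/-- Block-averaged magnetization. -/
noncomputable def m0Avg (N : ℕ) (p : (ℤ → ℤ) × (ℤ → ℤ)) : ℝ :=
  (∑ i ∈ Finset.Icc (-(N : ℤ)) (N : ℤ), (2 * (p.1 i : ℝ) - 1)) / (2 * (N : ℝ) + 1)

/-- Block-averaged scatterer density. -/
noncomputable def m1Avg (N : ℕ) (p : (ℤ → ℤ) × (ℤ → ℤ)) : ℝ :=
  (∑ i ∈ Finset.Icc (-(N : ℤ)) (N : ℤ), (p.2 i : ℝ)) / (2 * (N : ℝ) + 1)

/-- The macroscopic law `Φ(m₀, m₁) = ((1−2m₁)m₀, m₁)`. -/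
def PhiMap (m : ℝ × ℝ) : ℝ × ℝ := ((1 - 2 * m.2) * m.1, m.2)

/-- The family of all coordinate functions (spins and scatterers). -/
def coordFun : ℤ ⊕ ℤ → ((ℤ → ℤ) × (ℤ → ℤ)) → ℤ :=
  Sum.elim (fun i p => p.1 i) (fun i p => p.2 i)

/-!
With spins `σ = 2x - 1` and scatterer signs `ε = 1 - 2y`, one step of the chain reads
`σ^{t+1}_i = σ^t_{i-1} ε_{i-1}`, so `σ^t_i` depends only on `x_{i-t}` and `y_{i-t}, …, y_{i-1}`.
Hence `(σ^t_i)_{i ∈ ℤ}` is a stationary `t`-dependent family, with mean `m₀ (1 - 2m₁)^t` because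
the two factors are independent; the scatterers never move. Along each residue class modulo
`2(t+1)` of the enumeration `0, -1, 1, -2, 2, …` of `ℤ` these variables are pairwise independent,
so the ordinary strong law applies class by class; the symmetric blocks `[-N, N]` are initial
segments of that enumeration.
-/

open Finset Topology

def residueCount (K r n : ℕ) : ℕ := (n + (K - 1 - r)) / K

lemma lt_residueCount_iff {K r : ℕ} (hr : r < K) {m n : ℕ} :
    m < residueCount K r n ↔ r + m * K < n := by
  rw [residueCount, ← Nat.add_one_le_iff, Nat.le_div_iff_mul_le (by omega), add_mul]
  omega

lemma sum_range_eq_sum_residues {M : Type*} [AddCommMonoid M] (u : ℕ → M) {K : ℕ} (hK : 0 < K)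
    (n : ℕ) :
    ∑ i ∈ range n, u i = ∑ r ∈ range K, ∑ m ∈ range (residueCount K r n), u (r + m * K) := by
  rw [sum_sigma']
  refine sum_nbij' (fun i => ⟨i % K, i / K⟩) (fun x => x.1 + x.2 * K) ?_ ?_ ?_ ?_ ?_
  · intro i hi
    simp only [mem_range, mem_sigma] at hi ⊢
    refine ⟨Nat.mod_lt _ hK, (lt_residueCount_iff (Nat.mod_lt _ hK)).2 ?_⟩
    rwa [Nat.mod_add_div']
  · rintro ⟨r, m⟩ h
    simp only [mem_range, mem_sigma] at h ⊢
    exact (lt_residueCount_iff h.1).1 h.2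
  · intro i _
    exact Nat.mod_add_div' i K
  · rintro ⟨r, m⟩ h
    simp only [mem_range, mem_sigma] at h
    simp [Nat.add_mul_mod_self_right, Nat.mod_eq_of_lt h.1, Nat.add_mul_div_right _ _ hK,
      Nat.div_eq_of_lt h.1]
  · intro i _
    simp only [Nat.mod_add_div']

lemma tendsto_residueCount_atTop {K : ℕ} (hK : 0 < K) (r : ℕ) :
    Tendsto (residueCount K r) atTop atTop :=
  tendsto_atTop_mono (fun n => Nat.div_le_div_right (Nat.le_add_right n _))
    (Nat.tendsto_div_const_atTop hK.ne')

lemma tendsto_residueCount_div {K r : ℕ} (hr : r < K) :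
    Tendsto (fun n => (residueCount K r n : ℝ) / n) atTop (𝓝 (1 / K)) := by
  have hK : (0 : ℝ) < K := by exact_mod_cast Nat.zero_lt_of_lt hr
  rw [tendsto_iff_norm_sub_tendsto_zero]
  refine squeeze_zero' (Eventually.of_forall fun _ => norm_nonneg _) ?_
    tendsto_one_div_atTop_nhds_zero_nat
  filter_upwards [eventually_gt_atTop 0] with n hn
  have hn' : (0 : ℝ) < n := by exact_mod_cast hn
  have hcount : |(residueCount K r n : ℝ) * K - n| ≤ K := by
    have hdiv := Nat.div_add_mod (n + (K - 1 - r)) K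
    have hmod := Nat.mod_lt (n + (K - 1 - r)) (Nat.zero_lt_of_lt hr)
    have hup : residueCount K r n * K ≤ n + K := by rw [residueCount]; lia
    have hlo : n ≤ residueCount K r n * K + K := by rw [residueCount]; lia
    rw [abs_le]
    constructor
    · have : (n : ℝ) ≤ residueCount K r n * K + K := by exact_mod_cast hlo
      linarith
    · have : (residueCount K r n : ℝ) * K ≤ n + K := by exact_mod_cast hup
      linarith
  rw [Real.norm_eq_abs, div_sub_div _ _ hn'.ne' hK.ne', mul_one, abs_div,
    abs_of_pos (mul_pos hn' hK), div_le_div_iff₀ (mul_pos hn' hK) hn', one_mul, mul_comm (n : ℝ) K]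
  exact mul_le_mul_of_nonneg_right hcount hn'.le

lemma Filter.Tendsto.avg_comp_of_tendsto_div {u : ℕ → ℝ} {L α : ℝ} {c : ℕ → ℕ}
    (hu : Tendsto (fun n => (∑ m ∈ range n, u m) / n) atTop (𝓝 L))
    (hc : Tendsto c atTop atTop) (hcn : Tendsto (fun n => (c n : ℝ) / n) atTop (𝓝 α)) :
    Tendsto (fun n => (∑ m ∈ range (c n), u m) / n) atTop (𝓝 (α * L)) := by
  refine (hcn.mul (hu.comp hc)).congr' ?_
  filter_upwards [hc.eventually_gt_atTop 0, eventually_gt_atTop 0] with n hcn hn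
  have : (c n : ℝ) ≠ 0 := by positivity
  simp only [Function.comp_apply]
  field_simp

theorem tendsto_avg_of_tendsto_avg_residues {u : ℕ → ℝ} {L : ℝ} {K : ℕ} (hK : 0 < K)
    (h : ∀ r < K, Tendsto (fun n => (∑ m ∈ range n, u (r + m * K)) / n) atTop (𝓝 L)) :
    Tendsto (fun n => (∑ i ∈ range n, u i) / n) atTop (𝓝 L) := by
  have hres : ∀ r ∈ range K, Tendsto
      (fun n => (∑ m ∈ range (residueCount K r n), u (r + m * K)) / n) atTop (𝓝 (1 / K * L)) :=
    fun r hr => (h r (mem_range.1 hr)).avg_comp_of_tendsto_div (tendsto_residueCount_atTop hK r)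
      (tendsto_residueCount_div (mem_range.1 hr))
  have hL : ∑ _r ∈ range K, 1 / (K : ℝ) * L = L := by
    rw [sum_const, card_range, nsmul_eq_mul]
    field_simp
  simpa only [hL, ← sum_div, ← sum_range_eq_sum_residues u hK] using tendsto_finsetSum _ hres

theorem strong_law_ae_of_indepFun_of_modEq {Ω : Type*} [MeasurableSpace Ω] {μ : Measure Ω}
    {K : ℕ} (hK : 0 < K) (X : ℕ → Ω → ℝ) (hint : Integrable (X 0) μ)
    (hindep : ∀ n n', n ≠ n' → n ≡ n' [MOD K] → IndepFun (X n) (X n') μ)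
    (hident : ∀ n, IdentDistrib (X n) (X 0) μ μ) :
    ∀ᵐ ω ∂μ, Tendsto (fun n => (∑ i ∈ range n, X i ω) / n) atTop (𝓝 (∫ ω, X 0 ω ∂μ)) := by
  have hclass : ∀ r, ∀ᵐ ω ∂μ, Tendsto (fun n => (∑ m ∈ range n, X (r + m * K) ω) / n) atTop
      (𝓝 (∫ ω, X 0 ω ∂μ)) := by
    intro r
    have hlaw := strong_law_ae_real (fun m => X (r + m * K)) ((hident _).integrable_iff.2 hint)
      (fun m m' hm => hindep _ _ (fun h => hm (Nat.eq_of_mul_eq_mul_right hK (by omega)))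
        (by simp [Nat.ModEq, Nat.add_mul_mod_self_right]))
      (fun m => (hident _).trans (hident _).symm)
    rwa [(hident _).integral_eq] at hlaw
  filter_upwards [ae_all_iff.2 hclass] with ω hω
  exact tendsto_avg_of_tendsto_avg_residues hK fun r _ => hω r

def zigzag (n : ℕ) : ℤ := if n % 2 = 0 then n / 2 else -((n : ℤ) / 2) - 1

lemma zigzag_zero : zigzag 0 = 0 := rfl

lemma sum_Icc_eq_sum_range_zigzag {M : Type*} [AddCommMonoid M] (v : ℤ → M) (N : ℕ) :
    ∑ i ∈ Icc (-(N : ℤ)) N, v i = ∑ n ∈ range (2 * N + 1), v (zigzag n) := by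
  symm
  refine sum_nbij' zigzag (fun i => if 0 ≤ i then (2 * i).toNat else (-2 * i - 1).toNat)
    ?_ ?_ ?_ ?_ (fun _ _ => rfl)
  all_goals
    intro a ha
    simp only [mem_range, mem_Icc, zigzag] at ha ⊢
    split_ifs at * <;> omega

lemma lt_abs_zigzag_sub (k : ℕ) {n n' : ℕ} (hne : n ≠ n') (h : n ≡ n' [MOD 2 * (k + 1)]) :
    (k : ℤ) < |zigzag n - zigzag n'| := by
  obtain ⟨c, hc⟩ := Nat.modEq_iff_dvd.1 h
  have hc0 : c ≠ 0 := by
    rintro rfl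
    omega
  have hd : (n' : ℤ) - n = 2 * ((k + 1) * c) := by rw [hc]; push_cast; ring
  have hzig : zigzag n - zigzag n' = (k + 1) * c ∨ zigzag n - zigzag n' = -((k + 1) * c) := by
    generalize (k + 1 : ℤ) * c = d at hd
    simp only [zigzag]
    split_ifs <;> omega
  have hkc : (k : ℤ) < |(k + 1) * c| := by
    rw [abs_mul, abs_of_pos (by positivity : (0 : ℤ) < k + 1)]
    nlinarith [Int.one_le_abs hc0]
  rcases hzig with hz | hz <;> rw [hz] <;> simpa only [abs_neg] using hkc

noncomputable def blockAvg (v : ℤ → ℝ) (N : ℕ) : ℝ := (∑ i ∈ Icc (-(N : ℤ)) N, v i) / (2 * N + 1)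

lemma blockAvg_eq_avg_zigzag (v : ℤ → ℝ) (N : ℕ) :
    blockAvg v N = (∑ n ∈ range (2 * N + 1), v (zigzag n)) / ((2 * N + 1 : ℕ) : ℝ) := by
  rw [blockAvg, sum_Icc_eq_sum_range_zigzag]
  push_cast
  rfl

theorem strong_law_ae_blockAvg {Ω : Type*} [MeasurableSpace Ω] {μ : Measure Ω} (k : ℕ)
    (V : ℤ → Ω → ℝ) (hint : Integrable (V 0) μ)
    (hindep : ∀ i j, (k : ℤ) < |i - j| → IndepFun (V i) (V j) μ)
    (hident : ∀ i, IdentDistrib (V i) (V 0) μ μ) :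
    ∀ᵐ ω ∂μ, Tendsto (fun N => blockAvg (V · ω) N) atTop (𝓝 (∫ ω, V 0 ω ∂μ)) := by
  have hlaw := strong_law_ae_of_indepFun_of_modEq (K := 2 * (k + 1)) (by omega)
    (fun n => V (zigzag n)) hint (fun n n' hne h => hindep _ _ (lt_abs_zigzag_sub k hne h))
    (fun n => zigzag_zero ▸ hident _)
  have h2N : Tendsto (fun N : ℕ => 2 * N + 1) atTop atTop :=
    tendsto_atTop_atTop.2 fun b => ⟨b, fun N hN => by omega⟩
  filter_upwards [hlaw] with ω hω
  rw [zigzag_zero] at hω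
  simp only [blockAvg_eq_avg_zigzag]
  exact hω.comp h2N

namespace ProbabilityTheory

variable {Ω Ω' : Type*} [MeasurableSpace Ω] [MeasurableSpace Ω'] {μ : Measure Ω} {ν : Measure Ω'}

theorem iIndepFun.indepFun_of_measurable_iSup {ι : Type*} {β : ι → Type*}
    {m : ∀ i, MeasurableSpace (β i)} {f : ∀ i, Ω → β i} (hf_indep : iIndepFun f μ)
    (hf : ∀ i, Measurable (f i)) {S T : Set ι} (hST : Disjoint S T) {γ γ' : Type*}
    [MeasurableSpace γ] [MeasurableSpace γ'] {X : Ω → γ} {Y : Ω → γ'}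
    (hX : Measurable[⨆ i ∈ S, (m i).comap (f i)] X)
    (hY : Measurable[⨆ i ∈ T, (m i).comap (f i)] Y) :
    IndepFun X Y μ := by
  rw [IndepFun_iff_Indep]
  have hST_indep := indep_iSup_of_disjoint (fun i => (hf i).comap_le)
    ((iIndepFun_iff_iIndep _ _ _).1 hf_indep) hST
  exact indep_of_indep_of_le_right (indep_of_indep_of_le_left hST_indep hX.comap_le) hY.comap_le

theorem ae_eq_or_eq_of_measure_add_eq_one [IsProbabilityMeasure μ] {β : Type*} [MeasurableSpace β]
    [MeasurableSingletonClass β] {X : Ω → β} (hX : Measurable X) {a b : β} (hab : a ≠ b)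
    (h : μ {ω | X ω = a} + μ {ω | X ω = b} = 1) :
    ∀ᵐ ω ∂μ, X ω = a ∨ X ω = b := by
  have hb : MeasurableSet {ω | X ω = b} := hX (measurableSet_singleton b)
  refine ae_iff.2 ((prob_compl_eq_zero_iff ((hX (measurableSet_singleton a)).union hb)).2 ?_)
  rw [← h, ← measure_union _ hb]
  · rfl
  · exact Set.disjoint_left.2 fun ω ha hb => hab (ha.symm.trans hb)

theorem identDistrib_of_ae_eq_or_eq {β : Type*} [MeasurableSpace β] [Countable β]
    [MeasurableSingletonClass β] {X : Ω → β} {Y : Ω' → β} (hX : Measurable X) (hY : Measurable Y)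
    {a b : β} (hXab : ∀ᵐ ω ∂μ, X ω = a ∨ X ω = b) (hYab : ∀ᵐ ω ∂ν, Y ω = a ∨ Y ω = b)
    (ha : μ {ω | X ω = a} = ν {ω | Y ω = a}) (hb : μ {ω | X ω = b} = ν {ω | Y ω = b}) :
    IdentDistrib X Y μ ν := by
  refine ⟨hX.aemeasurable, hY.aemeasurable, Measure.ext_of_singleton fun c => ?_⟩
  rw [Measure.map_apply hX (measurableSet_singleton c),
    Measure.map_apply hY (measurableSet_singleton c)]
  by_cases hca : c = a
  · exact hca ▸ ha
  by_cases hcb : c = b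
  · exact hcb ▸ hb
  have hX0 : μ (X ⁻¹' {c}) = 0 := measure_eq_zero_iff_ae_notMem.2 <|
    hXab.mono fun ω hω hc => by rcases hω with h | h <;> simp_all
  have hY0 : ν (Y ⁻¹' {c}) = 0 := measure_eq_zero_iff_ae_notMem.2 <|
    hYab.mono fun ω hω hc => by rcases hω with h | h <;> simp_all
  rw [hX0, hY0]

structure IsBernoulli (X : Ω → ℤ) (q : ℝ) (μ : Measure Ω) : Prop where
  measurable : Measurable X
  mem_Icc : q ∈ Set.Icc (0 : ℝ) 1
  measure_eq_one : μ {ω | X ω = 1} = ENNReal.ofReal q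
  measure_eq_zero : μ {ω | X ω = 0} = ENNReal.ofReal (1 - q)

namespace IsBernoulli

variable [IsProbabilityMeasure μ] {X : Ω → ℤ} {q : ℝ}

theorem ae_eq_zero_or_one (hX : IsBernoulli X q μ) : ∀ᵐ ω ∂μ, X ω = 0 ∨ X ω = 1 := by
  refine ae_eq_or_eq_of_measure_add_eq_one hX.measurable zero_ne_one ?_
  rw [hX.measure_eq_zero, hX.measure_eq_one,
    ← ENNReal.ofReal_add (by linarith [hX.mem_Icc.2]) hX.mem_Icc.1]
  simp

theorem identDistrib [IsProbabilityMeasure ν] {Y : Ω' → ℤ} (hX : IsBernoulli X q μ)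
    (hY : IsBernoulli Y q ν) : IdentDistrib X Y μ ν :=
  identDistrib_of_ae_eq_or_eq hX.measurable hY.measurable hX.ae_eq_zero_or_one
    hY.ae_eq_zero_or_one (by rw [hX.measure_eq_zero, hY.measure_eq_zero])
    (by rw [hX.measure_eq_one, hY.measure_eq_one])

theorem integrable_intCast (hX : IsBernoulli X q μ) : Integrable (fun ω => (X ω : ℝ)) μ :=
  Integrable.of_bound (Measurable.of_discrete.comp hX.measurable).aestronglyMeasurable 1 <|
    hX.ae_eq_zero_or_one.mono fun ω h => by rcases h with h | h <;> simp [h]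

theorem integral_intCast (hX : IsBernoulli X q μ) : ∫ ω, (X ω : ℝ) ∂μ = q := by
  have hs : MeasurableSet {ω | X ω = 1} := hX.measurable (measurableSet_singleton 1)
  calc ∫ ω, (X ω : ℝ) ∂μ = ∫ ω, {ω | X ω = 1}.indicator 1 ω ∂μ :=
        integral_congr_ae <| hX.ae_eq_zero_or_one.mono fun ω h => by
          rcases h with h | h <;> simp [h, Set.indicator]
    _ = q := by
        rw [integral_indicator_one hs, measureReal_def, hX.measure_eq_one,
          ENNReal.toReal_ofReal hX.mem_Icc.1]

end IsBernoulli

end ProbabilityTheory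

namespace Kac

abbrev Config := (ℤ → ℤ) × (ℤ → ℤ)

noncomputable def spin (t : ℕ) (i : ℤ) (p : Config) : ℝ := 2 * ((kacPhi^[t] p).1 i : ℝ) - 1

noncomputable def scatterSign (j : ℤ) (p : Config) : ℝ := 1 - 2 * (p.2 j : ℝ)

lemma kacPhi_iterate_snd (t : ℕ) (p : Config) : (kacPhi^[t] p).2 = p.2 := by
  induction t with
  | zero => rfl
  | succ t ih => rw [Function.iterate_succ_apply', kacPhi, ih]

lemma spin_succ (t : ℕ) (i : ℤ) :
    spin (t + 1) i = fun p => spin t (i - 1) p * scatterSign (i - 1) p := by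
  funext p
  simp only [spin, scatterSign, Function.iterate_succ_apply', kacPhi, kacPhi_iterate_snd]
  push_cast
  ring

lemma PhiMap_iterate (m₀ m₁ : ℝ) (t : ℕ) : PhiMap^[t] (m₀, m₁) = (m₀ * (1 - 2 * m₁) ^ t, m₁) := by
  induction t with
  | zero => simp
  | succ t ih =>
    rw [Function.iterate_succ_apply', ih, PhiMap, pow_succ]
    ring_nf

lemma m0Avg_kacPhi_iterate (t N : ℕ) (p : Config) :
    m0Avg N (kacPhi^[t] p) = blockAvg (spin t · p) N := rfl

lemma m1Avg_kacPhi_iterate (t N : ℕ) (p : Config) :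
    m1Avg N (kacPhi^[t] p) = blockAvg (fun i => (p.2 i : ℝ)) N := by
  rw [m1Avg, kacPhi_iterate_snd]
  rfl

def binaryConfigs : Set Config :=
  {p | ∀ i, (p.1 i = 0 ∨ p.1 i = 1) ∧ (p.2 i = 0 ∨ p.2 i = 1)}

lemma mapsTo_kacPhi_binaryConfigs : Set.MapsTo kacPhi binaryConfigs binaryConfigs := by
  intro p hp i
  refine ⟨?_, (hp i).2⟩
  rcases (hp (i - 1)).1 with hx | hx <;> rcases (hp (i - 1)).2 with hy | hy <;>
    simp [kacPhi, hx, hy]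

lemma abs_spin_le_one {p : Config} (hp : p ∈ binaryConfigs) (t : ℕ) (i : ℤ) : |spin t i p| ≤ 1 := by
  rcases (mapsTo_kacPhi_binaryConfigs.iterate t hp i).1 with h | h <;> norm_num [spin, h]

abbrev coordSigma (S : Set (ℤ ⊕ ℤ)) : MeasurableSpace Config :=
  ⨆ s ∈ S, MeasurableSpace.comap (coordFun s) inferInstance

def kacWindow (t : ℕ) (i : ℤ) : Set (ℤ ⊕ ℤ) :=
  {s | Sum.elim (· = i - t) (fun j => i - t ≤ j ∧ j < i) s}

@[simp] lemma inl_mem_kacWindow {t : ℕ} {i j : ℤ} : Sum.inl j ∈ kacWindow t i ↔ j = i - t := Iff.rfl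

@[simp] lemma inr_mem_kacWindow {t : ℕ} {i j : ℤ} :
    Sum.inr j ∈ kacWindow t i ↔ i - t ≤ j ∧ j < i := Iff.rfl

lemma measurable_coordFun (s : ℤ ⊕ ℤ) : Measurable (coordFun s) := by
  cases s with
  | inl i => exact measurable_fst.eval
  | inr i => exact measurable_snd.eval

lemma measurable_coordFun_of_mem {S : Set (ℤ ⊕ ℤ)} {s : ℤ ⊕ ℤ} (hs : s ∈ S) :
    Measurable[coordSigma S] (coordFun s) :=
  Measurable.of_comap_le <|
    le_iSup₂ (f := fun s (_ : s ∈ S) => MeasurableSpace.comap (coordFun s) inferInstance) s hs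

lemma coordSigma_le (S : Set (ℤ ⊕ ℤ)) : coordSigma S ≤ (inferInstance : MeasurableSpace Config) :=
  iSup₂_le fun s _ => (measurable_coordFun s).comap_le

lemma measurable_scatterSign_of_mem {S : Set (ℤ ⊕ ℤ)} {j : ℤ} (hj : Sum.inr j ∈ S) :
    Measurable[coordSigma S] (scatterSign j) :=
  (Measurable.of_discrete (f := fun a : ℤ => 1 - 2 * (a : ℝ))).comp (measurable_coordFun_of_mem hj)

lemma measurable_spin_kacWindow (t : ℕ) (i : ℤ) :
    Measurable[coordSigma (kacWindow t i)] (spin t i) := by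
  induction t generalizing i with
  | zero =>
    have hmem : Sum.inl i ∈ kacWindow 0 i := by simp
    exact (Measurable.of_discrete (f := fun a : ℤ => 2 * (a : ℝ) - 1)).comp
      (measurable_coordFun_of_mem hmem)
  | succ t ih =>
    have hsub : kacWindow t (i - 1) ⊆ kacWindow (t + 1) i := by
      rintro (j | j) hj <;> simp only [inl_mem_kacWindow, inr_mem_kacWindow] at hj ⊢ <;> omega
    rw [spin_succ]
    exact ((ih (i - 1)).mono (biSup_mono hsub) le_rfl).mul
      (measurable_scatterSign_of_mem (by simp))

lemma measurable_spin (t : ℕ) (i : ℤ) : Measurable (spin t i) :=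
  (measurable_spin_kacWindow t i).mono (coordSigma_le _) le_rfl

lemma measurable_scatterSign (j : ℤ) : Measurable (scatterSign j) :=
  (measurable_scatterSign_of_mem (Set.mem_singleton _)).mono (coordSigma_le _) le_rfl

lemma disjoint_kacWindow {t : ℕ} {i j : ℤ} (h : (t : ℤ) < |i - j|) :
    Disjoint (kacWindow t i) (kacWindow t j) := by
  rw [lt_abs] at h
  rw [Set.disjoint_left]
  rintro (s | s) hi hj <;> simp only [inl_mem_kacWindow, inr_mem_kacWindow] at hi hj <;> omega

variable {μ : Measure Config}

lemma indepFun_spin (hind : iIndepFun coordFun μ) {t : ℕ} {i j : ℤ} (h : (t : ℤ) < |i - j|) :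
    IndepFun (spin t i) (spin t j) μ :=
  hind.indepFun_of_measurable_iSup measurable_coordFun (disjoint_kacWindow h)
    (measurable_spin_kacWindow t i) (measurable_spin_kacWindow t j)

lemma indepFun_spin_scatterSign (hind : iIndepFun coordFun μ) (t : ℕ) (i : ℤ) :
    IndepFun (spin t i) (scatterSign i) μ :=
  hind.indepFun_of_measurable_iSup measurable_coordFun
    (Set.disjoint_singleton_right.2 (by simp))
    (measurable_spin_kacWindow t i) (measurable_scatterSign_of_mem (Set.mem_singleton _))

lemma ae_mem_binaryConfigs [IsProbabilityMeasure μ] {q₀ q₁ : ℝ}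
    (hx : ∀ i, IsBernoulli (fun p : Config => p.1 i) q₀ μ)
    (hy : ∀ i, IsBernoulli (fun p : Config => p.2 i) q₁ μ) : ∀ᵐ p ∂μ, p ∈ binaryConfigs :=
  ae_all_iff.2 fun i => (hx i).ae_eq_zero_or_one.and (hy i).ae_eq_zero_or_one

lemma integrable_spin [IsProbabilityMeasure μ] (hbin : ∀ᵐ p ∂μ, p ∈ binaryConfigs) (t : ℕ) (i : ℤ) :
    Integrable (spin t i) μ :=
  Integrable.of_bound (measurable_spin t i).aestronglyMeasurable 1 <|
    hbin.mono fun _ hp => abs_spin_le_one hp t i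

lemma identDistrib_spin [IsProbabilityMeasure μ] (hind : iIndepFun coordFun μ) {q₀ q₁ : ℝ}
    (hx : ∀ i, IsBernoulli (fun p : Config => p.1 i) q₀ μ)
    (hy : ∀ i, IsBernoulli (fun p : Config => p.2 i) q₁ μ) (t : ℕ) (i j : ℤ) :
    IdentDistrib (spin t i) (spin t j) μ μ := by
  induction t generalizing i j with
  | zero =>
    exact ((hx i).identDistrib (hx j)).comp
      (Measurable.of_discrete (f := fun a : ℤ => 2 * (a : ℝ) - 1))
  | succ t ih =>
    have hsign := ((hy (i - 1)).identDistrib (hy (j - 1))).comp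
      (Measurable.of_discrete (f := fun a : ℤ => 1 - 2 * (a : ℝ)))
    rw [spin_succ, spin_succ]
    exact ((ih (i - 1) (j - 1)).prodMk hsign (indepFun_spin_scatterSign hind t _)
      (indepFun_spin_scatterSign hind t _)).comp measurable_mul

lemma integral_scatterSign [IsProbabilityMeasure μ] {q₁ : ℝ} {j : ℤ}
    (hy : IsBernoulli (fun p : Config => p.2 j) q₁ μ) : ∫ p, scatterSign j p ∂μ = 1 - 2 * q₁ := by
  unfold scatterSign
  rw [integral_sub (integrable_const 1) (hy.integrable_intCast.const_mul 2),
    integral_const_mul, hy.integral_intCast]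
  simp

lemma integral_spin [IsProbabilityMeasure μ] (hind : iIndepFun coordFun μ) {q₀ q₁ : ℝ}
    (hx : ∀ i, IsBernoulli (fun p : Config => p.1 i) q₀ μ)
    (hy : ∀ i, IsBernoulli (fun p : Config => p.2 i) q₁ μ) (t : ℕ) (i : ℤ) :
    ∫ p, spin t i p ∂μ = (2 * q₀ - 1) * (1 - 2 * q₁) ^ t := by
  induction t generalizing i with
  | zero =>
    simp only [spin, Function.iterate_zero, id_eq, pow_zero, mul_one]
    rw [integral_sub ((hx i).integrable_intCast.const_mul 2) (integrable_const 1),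
      integral_const_mul, (hx i).integral_intCast]
    simp
  | succ t ih =>
    calc ∫ p, spin (t + 1) i p ∂μ = ∫ p, (spin t (i - 1) * scatterSign (i - 1)) p ∂μ := by
          rw [spin_succ]; rfl
      _ = (∫ p, spin t (i - 1) p ∂μ) * ∫ p, scatterSign (i - 1) p ∂μ :=
          (indepFun_spin_scatterSign hind t (i - 1)).integral_mul_eq_mul_integral
            (measurable_spin t _).aestronglyMeasurable
            (measurable_scatterSign _).aestronglyMeasurable
      _ = (2 * q₀ - 1) * (1 - 2 * q₁) ^ (t + 1) := by
          rw [ih, integral_scatterSign (hy _), pow_succ, mul_assoc]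

lemma isBernoulli_fst {m₀ : ℝ} (hm₀ : m₀ ∈ Set.Icc (-1 : ℝ) 1)
    (hx1 : ∀ i : ℤ, μ {p | p.1 i = 1} = ENNReal.ofReal ((1 + m₀) / 2))
    (hx0 : ∀ i : ℤ, μ {p | p.1 i = 0} = ENNReal.ofReal ((1 - m₀) / 2)) (i : ℤ) :
    IsBernoulli (fun p : Config => p.1 i) ((1 + m₀) / 2) μ where
  measurable := measurable_fst.eval
  mem_Icc := ⟨by linarith [hm₀.1], by linarith [hm₀.2]⟩
  measure_eq_one := hx1 i
  measure_eq_zero := by rw [hx0 i]; ring_nf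

lemma isBernoulli_snd {m₁ : ℝ} (hm₁ : m₁ ∈ Set.Icc (0 : ℝ) 1)
    (hy1 : ∀ i : ℤ, μ {p | p.2 i = 1} = ENNReal.ofReal m₁)
    (hy0 : ∀ i : ℤ, μ {p | p.2 i = 0} = ENNReal.ofReal (1 - m₁)) (i : ℤ) :
    IsBernoulli (fun p : Config => p.2 i) m₁ μ :=
  ⟨measurable_snd.eval, hm₁, hy1 i, hy0 i⟩

lemma indepFun_scatterer (hind : iIndepFun coordFun μ) {i j : ℤ} (h : i ≠ j) :
    IndepFun (fun p : Config => (p.2 i : ℝ)) (fun p => (p.2 j : ℝ)) μ :=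
  (hind.indepFun (Sum.inr_injective.ne h)).comp Measurable.of_discrete Measurable.of_discrete

end Kac

open Kac

/-- strong law of large numbers for the Kac chain: for the i.i.d. product
Bernoulli measure with spin mean `m₀` and scatterer density `m₁`, almost every microstate
follows the macroscopic law `Φ` up to any time horizon `T`. -/
theorem kac_strong_lln (m₀ m₁ : ℝ) (hm₀ : m₀ ∈ Set.Icc (-1 : ℝ) 1)
    (hm₁ : m₁ ∈ Set.Icc (0 : ℝ) 1)
    (μ : Measure ((ℤ → ℤ) × (ℤ → ℤ))) [IsProbabilityMeasure μ]
    (hind : iIndepFun (m := fun _ : ℤ ⊕ ℤ => (inferInstance : MeasurableSpace ℤ)) coordFun μ)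
    (hx1 : ∀ i : ℤ, μ {p | p.1 i = 1} = ENNReal.ofReal ((1 + m₀) / 2))
    (hx0 : ∀ i : ℤ, μ {p | p.1 i = 0} = ENNReal.ofReal ((1 - m₀) / 2))
    (hy1 : ∀ i : ℤ, μ {p | p.2 i = 1} = ENNReal.ofReal m₁)
    (hy0 : ∀ i : ℤ, μ {p | p.2 i = 0} = ENNReal.ofReal (1 - m₁))
    (T : ℕ) :
    ∀ᵐ p ∂μ, ∀ t ≤ T,
      Tendsto (fun N : ℕ => m0Avg N (kacPhi^[t] p)) atTop (nhds (PhiMap^[t] (m₀, m₁)).1) ∧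
      Tendsto (fun N : ℕ => m1Avg N (kacPhi^[t] p)) atTop (nhds (PhiMap^[t] (m₀, m₁)).2) := by
  have hx := isBernoulli_fst hm₀ hx1 hx0
  have hy := isBernoulli_snd hm₁ hy1 hy0
  have hspin : ∀ t : ℕ, ∀ᵐ p ∂μ,
      Tendsto (fun N => blockAvg (spin t · p) N) atTop (𝓝 (m₀ * (1 - 2 * m₁) ^ t)) := by
    intro t
    have hlaw := strong_law_ae_blockAvg t (spin t)
      (integrable_spin (ae_mem_binaryConfigs hx hy) t 0) (fun i j h => indepFun_spin hind h)
      (fun i => identDistrib_spin hind hx hy t i 0)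
    rwa [integral_spin hind hx hy, show 2 * ((1 + m₀) / 2) - 1 = m₀ by ring] at hlaw
  have hscat : ∀ᵐ p ∂μ, Tendsto (fun N => blockAvg (fun i => (p.2 i : ℝ)) N) atTop (𝓝 m₁) := by
    have hlaw := strong_law_ae_blockAvg 0 (fun i (p : Config) => (p.2 i : ℝ))
      (hy 0).integrable_intCast (fun i j h => indepFun_scatterer hind (sub_ne_zero.1 (abs_pos.1 h)))
      (fun i => ((hy i).identDistrib (hy 0)).comp Measurable.of_discrete)
    rwa [(hy 0).integral_intCast] at hlaw
  filter_upwards [ae_all_iff.2 hspin, hscat] with p hspin_p hscat_p t _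
  simp only [m0Avg_kacPhi_iterate, m1Avg_kacPhi_iterate, PhiMap_iterate]
  exact ⟨hspin_p t, hscat_p⟩
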